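/- Let μ be a compactly supported Borel probability measure on ℝ^d and X ~ μ. For every r ∈ (0,1], E[ 1 / (n · μ(B_r(X))) ] ≤ c / (n r^d) for a constant c depending only on d and the support of μ (with the convention that the integrand is treated via the covering bound and μ(B_r(X)) > 0 μ-almost surely). -/

import Mathlib

/-!
Tonelli in place of a covering: averaging over the centre `y` of a ball of radius `r/2`
(`|·|` is Lebesgue measure),
`|B_{r/2}| ∫ μ(B_r(x))⁻¹ dμ(x) = ∫ (∫_{B_{r/2}(y)} μ(B_r(x))⁻¹ dμ(x)) dy`.
For `x ∈ B_{r/2}(y)` we have `B_{r/2}(y) ⊆ B_r(x)`, so the inner integral is at most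
`μ(B_{r/2}(y))⁻¹ μ(B_{r/2}(y)) ≤ 1`, and it vanishes unless `y` is within `r/2` of the support.
Hence the expectation is at most `|S₁| / |B_{r/2}| = c r^{-d}`, with `S₁` the closed
`1`-neighbourhood of the support.
-/

open MeasureTheory Metric

section PseudoMetricSpace

variable {X : Type*} [PseudoMetricSpace X] [MeasurableSpace X]

theorem measurable_measure_closedBall [OpensMeasurableSpace X] [SecondCountableTopology X]
    (μ : Measure X) [SFinite μ] (r : ℝ) : Measurable fun x => μ (closedBall x r) :=
  measurable_measure_prodMk_left (measurableSet_le (by fun_prop) measurable_const :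
    MeasurableSet {p : X × X | dist p.2 p.1 ≤ r})

theorem setLIntegral_closedBall_half_inv_measure_closedBall_le_one (μ : Measure X) (z : X)
    (r : ℝ) : ∫⁻ x in closedBall z (r / 2), (μ (closedBall x r))⁻¹ ∂μ ≤ 1 :=
  calc ∫⁻ x in closedBall z (r / 2), (μ (closedBall x r))⁻¹ ∂μ
      ≤ ∫⁻ _ in closedBall z (r / 2), (μ (closedBall z (r / 2)))⁻¹ ∂μ := by
        refine setLIntegral_mono measurable_const fun x hx => ENNReal.inv_le_inv' ?_
        refine measure_mono (closedBall_subset_closedBall' ?_)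
        rw [mem_closedBall, dist_comm] at hx
        linarith
    _ = (μ (closedBall z (r / 2)))⁻¹ * μ (closedBall z (r / 2)) := setLIntegral_const _ _
    _ ≤ 1 := ENNReal.inv_mul_le_one _

theorem setLIntegral_closedBall_half_inv_measure_closedBall_le_indicator (μ : Measure X)
    {S : Set X} (hS : μ Sᶜ = 0) (r : ℝ) (y : X) :
    ∫⁻ x in closedBall y (r / 2), (μ (closedBall x r))⁻¹ ∂μ
      ≤ (cthickening (r / 2) S).indicator 1 y := by
  by_cases hy : y ∈ cthickening (r / 2) S
  · simpa [hy] using setLIntegral_closedBall_half_inv_measure_closedBall_le_one μ y r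
  · have hnull : μ (closedBall y (r / 2)) = 0 :=
      measure_mono_null (t := Sᶜ) (fun x hx hxS =>
        hy (mem_cthickening_of_dist_le y x _ S hxS (mem_closedBall'.mp hx))) hS
    simp [setLIntegral_measure_zero _ _ hnull]

end PseudoMetricSpace

section NormedSpace

variable {E : Type*} [NormedAddCommGroup E] [NormedSpace ℝ E] [FiniteDimensional ℝ E]
  [MeasurableSpace E] [BorelSpace E] (μ ν : Measure E) [SFinite μ] [ν.IsAddHaarMeasure]
  {S : Set E}

theorem measure_closedBall_mul_lintegral_inv_measure_closedBall_le (hS : μ Sᶜ = 0) (r : ℝ) :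
    ν (closedBall 0 (r / 2)) * ∫⁻ x, (μ (closedBall x r))⁻¹ ∂μ
      ≤ ν (cthickening (r / 2) S) := by
  set f : E → ENNReal := fun x => (μ (closedBall x r))⁻¹
  have hf : Measurable f := (measurable_measure_closedBall μ r).inv
  calc ν (closedBall 0 (r / 2)) * ∫⁻ x, f x ∂μ
      = ∫⁻ x, ∫⁻ y, (closedBall x (r / 2)).indicator (fun _ => f x) y ∂ν ∂μ := by
        rw [← lintegral_const_mul _ hf]
        congr with x
        rw [lintegral_indicator_const measurableSet_closedBall,
          Measure.addHaar_closedBall_center ν x, mul_comm]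
    _ = ∫⁻ y, ∫⁻ x, (closedBall y (r / 2)).indicator f x ∂μ ∂ν := by
        rw [lintegral_lintegral_swap]
        · refine lintegral_congr fun y => lintegral_congr fun x => ?_
          simp only [Set.indicator, mem_closedBall]
          rw [dist_comm]
        · have hs : MeasurableSet {p : E × E | dist p.2 p.1 ≤ r / 2} :=
            measurableSet_le (by fun_prop) measurable_const
          exact ((hf.comp measurable_fst).indicator hs).aemeasurable
    _ ≤ ∫⁻ y, (cthickening (r / 2) S).indicator 1 y ∂ν := by
        gcongr with y
        rw [lintegral_indicator measurableSet_closedBall]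
        exact setLIntegral_closedBall_half_inv_measure_closedBall_le_indicator μ hS r y
    _ = ν (cthickening (r / 2) S) := lintegral_indicator_one isClosed_cthickening.measurableSet

theorem lintegral_inv_measure_closedBall_le (hS : μ Sᶜ = 0) {r : ℝ} (hr : 0 < r) :
    ∫⁻ x, (μ (closedBall x r))⁻¹ ∂μ ≤ ν (cthickening (r / 2) S)
      / (ENNReal.ofReal (r ^ Module.finrank ℝ E) * ν (closedBall 0 (1 / 2))) := by
  rw [← Measure.addHaar_closedBall_mul ν 0 hr.le (by norm_num), ← div_eq_mul_one_div,
    ENNReal.le_div_iff_mul_le (Or.inl (measure_closedBall_pos ν 0 (by positivity)).ne')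
      (Or.inl measure_closedBall_lt_top.ne), mul_comm]
  exact measure_closedBall_mul_lintegral_inv_measure_closedBall_le μ ν hS r

end NormedSpace

/-- For a compactly supported Borel probability measure `μ` on `ℝ^d`, there is a constant `c`
(depending only on `d` and the support) with
`E[1/(n μ(B_r(X)))] ≤ c/(n r^d)` for all `r ∈ (0,1]` and `n ≥ 1`. -/
theorem stmt_6 (d : ℕ) (μ : Measure (EuclideanSpace ℝ (Fin d))) [IsProbabilityMeasure μ]
    (S : Set (EuclideanSpace ℝ (Fin d))) (hS : IsCompact S) (hfull : μ Sᶜ = 0) :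
    ∃ c : ENNReal, 0 < c ∧ c ≠ ⊤ ∧ ∀ r : ℝ, 0 < r → r ≤ 1 → ∀ n : ℕ, 0 < n →
      (∫⁻ x, ((n : ENNReal) * μ (closedBall x r))⁻¹ ∂μ)
        ≤ c / ((n : ENNReal) * ENNReal.ofReal (r ^ d)) := by
  obtain ⟨s, hs⟩ : S.Nonempty := by
    rw [Set.nonempty_iff_ne_empty]
    rintro rfl
    simp at hfull
  set W := volume (closedBall (0 : EuclideanSpace ℝ (Fin d)) (1 / 2))
  set K := cthickening 1 S
  have hW : W ≠ 0 := (measure_closedBall_pos _ _ (by norm_num)).ne'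
  have hK : volume K ≠ 0 := ((measure_closedBall_pos volume s one_pos).trans_le
    (measure_mono (closedBall_subset_cthickening hs 1))).ne'
  refine ⟨volume K / W, ENNReal.div_pos hK measure_closedBall_lt_top.ne,
    ENNReal.div_ne_top hS.cthickening.measure_lt_top.ne hW, fun r hr hr1 n hn => ?_⟩
  set R := ENNReal.ofReal (r ^ d)
  have hn0 : (n : ENNReal) ≠ 0 := by exact_mod_cast hn.ne'
  have hR : R ≠ 0 := (ENNReal.ofReal_pos.2 (by positivity)).ne'
  have hmono : volume (cthickening (r / 2) S) ≤ volume K :=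
    measure_mono (cthickening_mono (by linarith) S)
  have hbound := lintegral_inv_measure_closedBall_le μ volume hfull hr
  rw [finrank_euclideanSpace_fin] at hbound
  calc ∫⁻ x, ((n : ENNReal) * μ (closedBall x r))⁻¹ ∂μ
      = (n : ENNReal)⁻¹ * ∫⁻ x, (μ (closedBall x r))⁻¹ ∂μ := by
        rw [← lintegral_const_mul' _ _ (ENNReal.inv_ne_top.2 hn0)]
        simp only [ENNReal.mul_inv (Or.inl hn0) (Or.inl (ENNReal.natCast_ne_top n))]
    _ ≤ (n : ENNReal)⁻¹ * (volume K / (R * W)) :=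
        mul_le_mul_right (hbound.trans (ENNReal.div_le_div_right hmono _)) _
    _ = volume K / W / (n * R) := by
        simp only [div_eq_mul_inv, ENNReal.mul_inv (Or.inl hR) (Or.inl ENNReal.ofReal_ne_top),
          ENNReal.mul_inv (Or.inl hn0) (Or.inl (ENNReal.natCast_ne_top n))]
        ring
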